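/- arXiv:2203.05810 — 2 statements merged into one kernel-verified Lean document; each statement's English description precedes it below -/
import Mathlib

section
/- Let K be a number field with ring of integers 𝒪_K, let N be a nonzero integer, and let R = 𝒪_K[1/N]. Let v be a finite place of K of odd residue characteristic (i.e., 2 ∉ v), let p ∈ 𝒪_K be a generator of the prime ideal v, and let q ∈ 𝒪_K with q ∉ v. Assume that q is not a square in the completion K_v, and that every unit t of R is a square in K_v. Then for every unit t of R, the only triple (x, y, z) ∈ K³ satisfying t·z² = p·x² + q·y² is (0, 0, 0). -/
open IsDedekindDomain NumberField Multiplicative Filter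

local notation "ℤₘ₀" => WithZero (Multiplicative ℤ)


private lemma parity_aux (γ δ : ℤₘ₀) (hγ : γ ≠ 0) (hδ : δ ≠ 0) :
    (↑(ofAdd (-1 : ℤ)) : ℤₘ₀) * γ ^ 2 ≠ δ ^ 2 := by
  obtain ⟨g, rfl⟩ := WithZero.ne_zero_iff_exists.mp hγ
  obtain ⟨d, rfl⟩ := WithZero.ne_zero_iff_exists.mp hδ
  intro h
  rw [← WithZero.coe_pow, ← WithZero.coe_pow, ← WithZero.coe_mul, WithZero.coe_inj] at h
  have h2 := congrArg toAdd h
  simp only [toAdd_mul, toAdd_pow, toAdd_ofAdd, nsmul_eq_mul, Nat.cast_ofNat] at h2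
  omega



private lemma pow_succ_lt_one' {ε : ℤₘ₀} (h : ε < 1) (n : ℕ) : ε ^ (n + 1) < 1 :=
  lt_of_le_of_lt (by
    calc ε ^ (n + 1) = ε ^ n * ε := pow_succ ε n
    _ ≤ 1 ^ n * ε := mul_le_mul_left (pow_le_pow_left' h.le n) ε
    _ = ε := by rw [one_pow, one_mul]) h

private lemma hensel_sq {L : Type*} [Field L] [vL : Valued L ℤₘ₀] [CompleteSpace L]
    (h2 : Valued.v (2 : L) = 1) {u : L} (hu : Valued.v (u - 1) < 1) :
    ∃ s : L, s ^ 2 = u := by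
  by_cases hu1 : u = 1
  · exact ⟨1, by simp [hu1]⟩
  have hε0 : Valued.v (u - 1) ≠ 0 := by
    rw [Valuation.ne_zero_iff]
    exact sub_ne_zero.mpr hu1
  letI : Valuation.RankOne (vL.v) :=
    { hom' := (WithZeroMulInt.toNNReal (by norm_num : (2 : NNReal) ≠ 0)).comp
        MonoidWithZeroHom.ValueGroup₀.embedding
      strictMono' := (WithZeroMulInt.toNNReal_strictMono (e := 2) (by norm_num)).comp
        MonoidWithZeroHom.ValueGroup₀.embedding_strictMono
      exists_val_nontrivial := ⟨u - 1, hε0, ne_of_lt hu⟩ }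
  letI : NormedField L := Valued.toNormedField L ℤₘ₀
  set ε := Valued.v (u - 1) with hεdef
  have h20 : (2 : L) ≠ 0 := by
    intro h
    rw [h, map_zero] at h2
    exact zero_ne_one h2
  set c : ℕ → L := fun n => Nat.rec (1 : L) (fun _ b => (b + u / b) / 2) n with hcdef
  have hc0 : c 0 = 1 := rfl
  have hcsucc : ∀ n, c (n + 1) = (c n + u / c n) / 2 := fun n => rfl
  have key : ∀ n, Valued.v (c n) = 1 ∧ Valued.v (c n ^ 2 - u) ≤ ε ^ (n + 1) := by
    intro n
    induction n with
    | zero =>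
      refine ⟨by rw [hc0, map_one], ?_⟩
      rw [hc0, one_pow, pow_one, Valuation.map_sub_swap]
    | succ n ih =>
      obtain ⟨h1, hle⟩ := ih
      have hcn0 : c n ≠ 0 := by
        intro h
        rw [h, map_zero] at h1
        exact zero_ne_one h1
      have e1 : c (n + 1) ^ 2 - u = ((c n ^ 2 - u) / (2 * c n)) ^ 2 := by
        rw [hcsucc]
        field_simp
        ring
      have e2 : c (n + 1) - c n = (u - c n ^ 2) / (2 * c n) := by
        rw [hcsucc]
        field_simp
        ring
      have hvsmall : Valued.v ((u - c n ^ 2) / (2 * c n)) < Valued.v (c n) := by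
        rw [Valuation.map_div, Valuation.map_mul, h2, h1, one_mul, div_one,
          Valuation.map_sub_swap]
        exact lt_of_le_of_lt hle (pow_succ_lt_one' hu n)
      constructor
      · have : c (n + 1) = c n + (u - c n ^ 2) / (2 * c n) := by
          rw [← e2]; ring
        rw [this, Valuation.map_add_eq_of_lt_left _ hvsmall, h1]
      · rw [e1, Valuation.map_pow, Valuation.map_div, Valuation.map_mul, h2, h1, one_mul,
          div_one]
        calc Valued.v (c n ^ 2 - u) ^ 2 ≤ (ε ^ (n + 1)) ^ 2 := pow_le_pow_left' hle 2
          _ = ε ^ (n + 2) * ε ^ n := by rw [← pow_mul, ← pow_add]; congr 1; omega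
          _ ≤ ε ^ (n + 2) * 1 ^ n := mul_le_mul_right (pow_le_pow_left' hu.le n) _
          _ = ε ^ (n + 2) := by rw [one_pow, mul_one]
  set r : ℝ := ‖u - 1‖ with hrdef
  have hr0 : 0 ≤ r := norm_nonneg _
  have hr1 : r < 1 := by
    rw [hrdef]
    exact Valued.toNormedField.norm_lt_one_iff.mpr hu
  have hmono : ∀ (x : L) (n : ℕ), Valued.v x ≤ ε ^ n → ‖x‖ ≤ r ^ n := by
    intro x n hx
    rw [hrdef, ← norm_pow]
    exact Valued.toNormedField.norm_le_iff.mpr (by rwa [Valuation.map_pow])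
  have hdist : ∀ n, dist (c n) (c (n + 1)) ≤ r * r ^ n := by
    intro n
    obtain ⟨h1, hle⟩ := key n
    have hcn0 : c n ≠ 0 := by
      intro h
      rw [h, map_zero] at h1
      exact zero_ne_one h1
    have e2 : c (n + 1) - c n = (u - c n ^ 2) / (2 * c n) := by
      rw [hcsucc]
      field_simp
      ring
    rw [dist_eq_norm, ← norm_neg, neg_sub, e2]
    have hv : Valued.v ((u - c n ^ 2) / (2 * c n)) ≤ ε ^ (n + 1) := by
      rw [Valuation.map_div, Valuation.map_mul, h2, h1, one_mul, div_one,
        Valuation.map_sub_swap]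
      exact hle
    calc ‖(u - c n ^ 2) / (2 * c n)‖ ≤ r ^ (n + 1) := hmono _ (n + 1) hv
      _ = r * r ^ n := by rw [pow_succ, mul_comm]
  have hcauchy : CauchySeq c := cauchySeq_of_le_geometric r r hr1 hdist
  obtain ⟨s, hs⟩ := cauchySeq_tendsto_of_complete hcauchy
  refine ⟨s, ?_⟩
  have t1 : Tendsto (fun n => c n ^ 2 - u) atTop (nhds (s ^ 2 - u)) :=
    (hs.pow 2).sub_const u
  have t2 : Tendsto (fun n => c n ^ 2 - u) atTop (nhds 0) := by
    apply squeeze_zero_norm (fun n => hmono _ (n + 1) (key n).2)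
    have := (tendsto_pow_atTop_nhds_zero_of_lt_one hr0 hr1).comp
      (tendsto_add_atTop_nat 1)
    exact this
  have := tendsto_nhds_unique t1 t2
  exact sub_eq_zero.mp this

private lemma local_nontriv {L : Type*} [Field L] [Valued L ℤₘ₀] [CompleteSpace L]
    {P Q : L} (hP : Valued.v P = (↑(ofAdd (-1 : ℤ)) : ℤₘ₀))
    (hQ : Valued.v Q = 1) (h2 : Valued.v (2 : L) = 1)
    (hns : ¬∃ s : L, s ^ 2 = Q) :
    ∀ A B C : L, C ^ 2 = P * A ^ 2 + Q * B ^ 2 → A = 0 ∧ B = 0 ∧ C = 0 := by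
  have hP0 : P ≠ 0 := by
    intro h
    rw [h, map_zero] at hP
    exact (WithZero.coe_ne_zero (a := ofAdd (-1 : ℤ))) hP.symm
  intro A B C hEq
  have hB : B = 0 := by
    by_contra hB
    set A' := A / B with hA'def
    set C' := C / B with hC'def
    have hEq' : C' ^ 2 = P * A' ^ 2 + Q := by
      rw [hA'def, hC'def, div_pow, div_pow]
      field_simp
      linear_combination hEq
    by_cases hA : A' = 0
    · exact hns ⟨C', by rw [hEq', hA]; ring⟩
    · have hvA' : Valued.v A' ≠ 0 := (Valuation.ne_zero_iff _).mpr hA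
      have hγ1 : Valued.v (P * A' ^ 2) ≠ 1 := by
        rw [Valuation.map_mul, Valuation.map_pow, hP]
        simpa using parity_aux (Valued.v A') 1 hvA' one_ne_zero
      have hγ0 : Valued.v (P * A' ^ 2) ≠ 0 := by
        rw [Valuation.ne_zero_iff]
        exact mul_ne_zero hP0 (pow_ne_zero 2 hA)
      have hCmax : Valued.v (C' ^ 2) = max (Valued.v (P * A' ^ 2)) 1 := by
        rw [hEq', Valuation.map_add_of_distinct_val, hQ]
        rw [hQ]
        exact hγ1
      rcases lt_or_gt_of_ne hγ1 with hlt | hgt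
      · -- v(P A'^2) < 1 : Hensel gives √Q
        have hC2 : Valued.v (C' ^ 2) = 1 := by rw [hCmax, max_eq_right hlt.le]
        have hC'0 : C' ≠ 0 := by
          intro h
          rw [h] at hC2
          simp at hC2
        obtain ⟨s, hsu⟩ := hensel_sq h2 (u := Q / C' ^ 2) (by
          have e : Q / C' ^ 2 - 1 = -(P * A' ^ 2) / C' ^ 2 := by
            field_simp
            linear_combination -hEq'
          rw [e, Valuation.map_div, Valuation.map_neg, hC2, div_one]
          exact hlt)
        exact hns ⟨C' * s, by rw [mul_pow, hsu]; field_simp⟩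
      · -- v(P A'^2) > 1 : parity contradiction
        have hC2 : Valued.v (C' ^ 2) = Valued.v (P * A' ^ 2) := by
          rw [hCmax, max_eq_left hgt.le]
        have hC'0 : Valued.v C' ≠ 0 := by
          rw [Valuation.ne_zero_iff]
          intro h
          rw [h, zero_pow two_ne_zero, map_zero] at hC2
          exact hγ0 hC2.symm
        refine parity_aux (Valued.v A') (Valued.v C') hvA' hC'0 ?_
        rw [← hP, ← Valuation.map_pow, ← Valuation.map_mul, ← Valuation.map_pow, hC2]
  have hA : A = 0 := by
    by_contra hA
    rw [hB] at hEq
    have hEq2 : C ^ 2 = P * A ^ 2 := by rw [hEq]; ring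
    have hC0 : C ≠ 0 := by
      intro h
      rw [h] at hEq2
      exact mul_ne_zero hP0 (pow_ne_zero 2 hA) (by simpa using hEq2.symm)
    refine parity_aux (Valued.v A) (Valued.v C) ((Valuation.ne_zero_iff _).mpr hA)
      ((Valuation.ne_zero_iff _).mpr hC0) ?_
    rw [← hP, ← Valuation.map_pow, ← Valuation.map_mul, ← Valuation.map_pow, hEq2]
  have hC : C = 0 := by
    rw [hA, hB] at hEq
    have : C ^ 2 = 0 := by rw [hEq]; ring
    exact pow_eq_zero_iff (two_ne_zero) |>.mp this
  exact ⟨hA, hB, hC⟩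

/-- Let `K` be a number field, `N` a nonzero integer, and `R = 𝓞_K[1/N]` (realized as the
subalgebra of `K` generated over `𝓞 K` by `1/N`). Let `v` be a finite place of odd residue
characteristic, `p ∈ 𝓞 K` a generator of the prime ideal `v`, and `q ∈ 𝓞 K` with `q ∉ v`.
If `q` is not a square in `K_v` and every unit of `R` is a square in `K_v`, then for every
unit `t` of `R` the only solution of `t·z² = p·x² + q·y²` in `K` is `(0, 0, 0)`. -/
theorem stmt_7 (K : Type*) [Field K] [NumberField K] (N : ℤ) (hN : N ≠ 0)
    (R : Subalgebra (𝓞 K) K) (hR : R = Algebra.adjoin (𝓞 K) {((N : K))⁻¹})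
    (v : HeightOneSpectrum (𝓞 K)) (hv2 : (2 : 𝓞 K) ∉ v.asIdeal)
    (p : 𝓞 K) (hp : v.asIdeal = Ideal.span {p})
    (q : 𝓞 K) (hq : q ∉ v.asIdeal)
    (hqns : ¬∃ s : v.adicCompletion K,
      s ^ 2 = algebraMap K (v.adicCompletion K) (algebraMap (𝓞 K) K q))
    (hsq : ∀ t : R, IsUnit t →
      ∃ s : v.adicCompletion K, s ^ 2 = algebraMap K (v.adicCompletion K) (t : K)) :
    ∀ t : R, IsUnit t →
      ∀ x y z : K,
        (t : K) * z ^ 2 = algebraMap (𝓞 K) K p * x ^ 2 + algebraMap (𝓞 K) K q * y ^ 2 →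
        x = 0 ∧ y = 0 ∧ z = 0 := by
  intro t ht x y z hxyz
  set L := v.adicCompletion K with hLdef
  set F := algebraMap K L with hFdef
  -- valuations of global elements in the completion
  have hval : ∀ a : 𝓞 K, Valued.v (F (algebraMap (𝓞 K) K a)) = v.intValuation a := by
    intro a
    rw [show F (algebraMap (𝓞 K) K a) = ((algebraMap (𝓞 K) K a : K) : v.adicCompletion K)
      from rfl, HeightOneSpectrum.valuedAdicCompletion_eq_valuation',
      HeightOneSpectrum.valuation_of_algebraMap]
  have hunitval : ∀ a : 𝓞 K, a ∉ v.asIdeal → v.intValuation a = 1 := by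
    intro a ha
    refine le_antisymm (v.intValuation_le_one a) (not_lt.mp fun hlt => ha ?_)
    rw [HeightOneSpectrum.intValuation_apply] at hlt
    exact Ideal.dvd_span_singleton.mp ((v.intValuation_lt_one_iff_dvd a).mp hlt)
  have hp0 : p ≠ 0 := by
    rintro rfl
    exact v.ne_bot (by rw [hp, Ideal.span_singleton_eq_bot])
  have hP : Valued.v (F (algebraMap (𝓞 K) K p)) = (↑(ofAdd (-1 : ℤ)) : ℤₘ₀) := by
    rw [hval, v.intValuation_singleton hp0 hp, WithZero.exp_eq_coe_ofAdd]
  have hQ : Valued.v (F (algebraMap (𝓞 K) K q)) = 1 := by rw [hval, hunitval q hq]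
  have h2L : Valued.v (2 : L) = 1 := by
    have h2eq : (2 : L) = F (algebraMap (𝓞 K) K 2) := by
      rw [map_ofNat, map_ofNat]
    rw [h2eq, hval, hunitval 2 hv2]
  obtain ⟨s, hst⟩ := hsq t ht
  have hEqL : (s * F z) ^ 2 =
      F (algebraMap (𝓞 K) K p) * F x ^ 2 + F (algebraMap (𝓞 K) K q) * F y ^ 2 := by
    have hmap := congrArg F hxyz
    simp only [map_mul, map_add, map_pow] at hmap
    rw [mul_pow, hst]
    exact hmap
  obtain ⟨hx0, hy0, hz0⟩ := local_nontriv hP hQ h2L hqns (F x) (F y) (s * F z) hEqL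
  have hFinj : Function.Injective F := (algebraMap K L).injective
  have ht0 : (t : K) ≠ 0 := by
    obtain ⟨t', htt'⟩ := ht.exists_right_inv
    have h1 : ((t * t' : R) : K) = 1 := by rw [htt']; simp
    push_cast at h1
    exact left_ne_zero_of_mul_eq_one h1
  have hs0 : s ≠ 0 := by
    intro h
    rw [h, zero_pow two_ne_zero] at hst
    exact ht0 (hFinj (by rw [← hst, map_zero]))
  refine ⟨hFinj (by rw [hx0, map_zero]), hFinj (by rw [hy0, map_zero]), hFinj ?_⟩
  rcases mul_eq_zero.mp hz0 with h | h
  · exact absurd h hs0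
  · rw [h, map_zero]
end

section
/- Let p and q be odd prime numbers with p ≡ 1 (mod 4) and with the residue class of q in ℤ/pℤ not a square. Then: (i) for every prime number ℓ there exist a unit t of ℤ_ℓ and x, y, z ∈ ℤ_ℓ, not all divisible by ℓ, with t·z² = p·x² + q·y²; (ii) there exist ε ∈ {1, −1} and real numbers (x, y, z) ≠ (0, 0, 0) with ε·z² = p·x² + q·y²; and yet (iii) for each ε ∈ {1, −1}, the only rational triple (x, y, z) with ε·z² = p·x² + q·y² is (0, 0, 0). -/
/-!
Reducing `z² = p x² + q y²` modulo `p` gives `z² ≡ q y²`, so as `q` is not a square mod `p`,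
`p` divides `y` and `z`, then `p² ∣ p x²` forces `p ∣ x`, and `(x, y, z) / p` is again a solution.
Hence every integral solution is divisible by all powers of `p` and vanishes; clearing
denominators covers ℚ, and the twist `-z² = p x² + q y²` is anisotropic by positivity.
Locally nothing obstructs: as the twist `t` may be any `ℓ`-adic unit, `t = q` with `(0, 1, 1)`
works when `ℓ ∤ q` and `t = p` with `(1, 0, 1)` when `ℓ ∤ p`.
-/

theorem Int.eq_zero_of_forall_pow_dvd {a b : ℤ} (ha : a.natAbs ≠ 1) (h : ∀ k : ℕ, a ^ k ∣ b) :
    b = 0 := by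
  by_contra hb
  obtain ⟨k, hk⟩ := Int.finiteMultiplicity_iff.mpr ⟨ha, hb⟩
  exact hk (h (k + 1))

section Descent

variable {p : ℕ} {q : ℤ}

theorem Int.prime_dvd_of_sq_eq_of_not_isSquare (hp : p.Prime) (hq : ¬IsSquare (q : ZMod p))
    {x y z : ℤ} (h : z ^ 2 = p * x ^ 2 + q * y ^ 2) :
    (p : ℤ) ∣ x ∧ (p : ℤ) ∣ y ∧ (p : ℤ) ∣ z := by
  have : Fact p.Prime := ⟨hp⟩
  have hmod : (z : ZMod p) ^ 2 = q * (y : ZMod p) ^ 2 := by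
    simpa using congrArg (Int.cast : ℤ → ZMod p) h
  have hy : (y : ZMod p) = 0 := by
    by_contra hy
    exact hq ⟨z / y, by field_simp; exact hmod.symm⟩
  have hz : (z : ZMod p) = 0 := by
    simpa [hy] using hmod
  obtain ⟨b, rfl⟩ := (ZMod.intCast_zmod_eq_zero_iff_dvd y p).mp hy
  obtain ⟨c, rfl⟩ := (ZMod.intCast_zmod_eq_zero_iff_dvd z p).mp hz
  have hx2 : x ^ 2 = p * (c ^ 2 - q * b ^ 2) := by
    refine mul_left_cancel₀ (Int.natCast_ne_zero.mpr hp.ne_zero) ?_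
    linear_combination -h
  refine ⟨?_, dvd_mul_right _ _, dvd_mul_right _ _⟩
  exact (Nat.prime_iff_prime_int.mp hp).dvd_of_dvd_pow (Dvd.intro _ hx2.symm)

theorem Int.pow_dvd_of_sq_eq_of_not_isSquare (hp : p.Prime) (hq : ¬IsSquare (q : ZMod p))
    (k : ℕ) {x y z : ℤ} (h : z ^ 2 = p * x ^ 2 + q * y ^ 2) :
    (p : ℤ) ^ k ∣ x ∧ (p : ℤ) ^ k ∣ y ∧ (p : ℤ) ^ k ∣ z := by
  induction k generalizing x y z with
  | zero => simp
  | succ k ih =>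
    obtain ⟨⟨a, rfl⟩, ⟨b, rfl⟩, ⟨c, rfl⟩⟩ := prime_dvd_of_sq_eq_of_not_isSquare hp hq h
    have h' : c ^ 2 = p * a ^ 2 + q * b ^ 2 := by
      refine mul_left_cancel₀ (pow_ne_zero 2 (Int.natCast_ne_zero.mpr hp.ne_zero)) ?_
      linear_combination h
    obtain ⟨ha, hb, hc⟩ := ih h'
    rw [pow_succ']
    exact ⟨mul_dvd_mul_left _ ha, mul_dvd_mul_left _ hb, mul_dvd_mul_left _ hc⟩

theorem Int.eq_zero_of_sq_eq_of_not_isSquare (hp : p.Prime) (hq : ¬IsSquare (q : ZMod p))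
    {x y z : ℤ} (h : z ^ 2 = p * x ^ 2 + q * y ^ 2) : x = 0 ∧ y = 0 ∧ z = 0 := by
  have hp1 : (p : ℤ).natAbs ≠ 1 := by simpa using hp.ne_one
  have hdvd k := pow_dvd_of_sq_eq_of_not_isSquare hp hq k h
  exact ⟨Int.eq_zero_of_forall_pow_dvd hp1 fun k => (hdvd k).1,
    Int.eq_zero_of_forall_pow_dvd hp1 fun k => (hdvd k).2.1,
    Int.eq_zero_of_forall_pow_dvd hp1 fun k => (hdvd k).2.2⟩

theorem Rat.eq_zero_of_sq_eq_of_not_isSquare (hp : p.Prime) (hq : ¬IsSquare (q : ZMod p))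
    {x y z : ℚ} (h : z ^ 2 = p * x ^ 2 + q * y ^ 2) : x = 0 ∧ y = 0 ∧ z = 0 := by
  set d : ℚ := x.den * y.den * z.den
  have hd : d ≠ 0 := by positivity
  have hX : ((x.num * y.den * z.den : ℤ) : ℚ) = x * d := by
    push_cast; rw [← Rat.mul_den_eq_num]; ring
  have hY : ((y.num * x.den * z.den : ℤ) : ℚ) = y * d := by
    push_cast; rw [← Rat.mul_den_eq_num]; ring
  have hZ : ((z.num * x.den * y.den : ℤ) : ℚ) = z * d := by
    push_cast; rw [← Rat.mul_den_eq_num]; ring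
  have hint : (z.num * x.den * y.den) ^ 2 =
      p * (x.num * y.den * z.den) ^ 2 + q * (y.num * x.den * z.den) ^ 2 := by
    have : (z * d) ^ 2 = p * (x * d) ^ 2 + q * (y * d) ^ 2 := by linear_combination d ^ 2 * h
    rw [← hX, ← hY, ← hZ] at this
    exact_mod_cast this
  obtain ⟨hx, hy, hz⟩ := Int.eq_zero_of_sq_eq_of_not_isSquare hp hq hint
  exact ⟨(mul_eq_zero_iff_right hd).mp (by rw [← hX, hx, Int.cast_zero]),
    (mul_eq_zero_iff_right hd).mp (by rw [← hY, hy, Int.cast_zero]),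
    (mul_eq_zero_iff_right hd).mp (by rw [← hZ, hz, Int.cast_zero])⟩

end Descent

theorem eq_zero_of_neg_sq_eq {K : Type*} [Field K] [LinearOrder K] [IsStrictOrderedRing K]
    {p q x y z : K} (hp : 0 < p) (hq : 0 < q) (h : -z ^ 2 = p * x ^ 2 + q * y ^ 2) :
    x = 0 ∧ y = 0 ∧ z = 0 := by
  have hsum : (p * x ^ 2 + q * y ^ 2) + z ^ 2 = 0 := by linear_combination -h
  obtain ⟨hxy, hz⟩ := (add_eq_zero_iff_of_nonneg (by positivity) (by positivity)).mp hsum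
  obtain ⟨hx, hy⟩ := (add_eq_zero_iff_of_nonneg (by positivity) (by positivity)).mp hxy
  simp_all [hp.ne', hq.ne']

theorem PadicInt.exists_isUnit_primitive_twist {p q : ℕ} (hpq : p.Coprime q) (ℓ : ℕ)
    [hℓ : Fact ℓ.Prime] :
    ∃ t x y z : ℤ_[ℓ], IsUnit t ∧ ¬((ℓ : ℤ_[ℓ]) ∣ x ∧ (ℓ : ℤ_[ℓ]) ∣ y ∧ (ℓ : ℤ_[ℓ]) ∣ z) ∧
      t * z ^ 2 = p * x ^ 2 + q * y ^ 2 := by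
  have isUnit_natCast {n : ℕ} (hn : ¬ℓ ∣ n) : IsUnit (n : ℤ_[ℓ]) := by
    rw [PadicInt.isUnit_iff, PadicInt.norm_natCast_eq_one_iff]
    exact (Nat.Prime.coprime_iff_not_dvd hℓ.out).mpr hn
  have primitive : ¬(ℓ : ℤ_[ℓ]) ∣ 1 := PadicInt.prime_p.not_dvd_one
  by_cases hℓp : ℓ ∣ p
  · have hℓq : ¬ℓ ∣ q := fun hℓq => hℓ.out.one_lt.ne' (Nat.eq_one_of_dvd_coprimes hpq hℓp hℓq)
    exact ⟨q, 0, 1, 1, isUnit_natCast hℓq, fun h => primitive h.2.2, by ring⟩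
  · exact ⟨p, 1, 0, 1, isUnit_natCast hℓp, fun h => primitive h.2.2, by ring⟩

theorem stmt_10_general (p q : ℕ) (hp : p.Prime) (hqns : ¬IsSquare ((q : ZMod p))) :
    (∀ (ℓ : ℕ) [Fact ℓ.Prime],
      ∃ t x y z : ℤ_[ℓ],
        IsUnit t ∧
        ¬((ℓ : ℤ_[ℓ]) ∣ x ∧ (ℓ : ℤ_[ℓ]) ∣ y ∧ (ℓ : ℤ_[ℓ]) ∣ z) ∧
        t * z ^ 2 = (p : ℤ_[ℓ]) * x ^ 2 + (q : ℤ_[ℓ]) * y ^ 2) ∧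
    (∃ ε : ℤ, (ε = 1 ∨ ε = -1) ∧
      ∃ x y z : ℝ, (x, y, z) ≠ (0, 0, 0) ∧
        (ε : ℝ) * z ^ 2 = (p : ℝ) * x ^ 2 + (q : ℝ) * y ^ 2) ∧
    (∀ ε : ℤ, ε = 1 ∨ ε = -1 →
      ∀ x y z : ℚ, (ε : ℚ) * z ^ 2 = (p : ℚ) * x ^ 2 + (q : ℚ) * y ^ 2 →
        x = 0 ∧ y = 0 ∧ z = 0) := by
  have hq : (q : ZMod p) ≠ 0 := fun h => hqns ⟨0, by simp [h]⟩
  have hpq : p.Coprime q := hp.coprime_iff_not_dvd.mpr ((ZMod.natCast_eq_zero_iff q p).not.mp hq)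
  have hqZ : ¬IsSquare ((q : ℤ) : ZMod p) := by simpa using hqns
  refine ⟨fun ℓ _ => PadicInt.exists_isUnit_primitive_twist hpq ℓ,
    ⟨1, .inl rfl, 1, 0, √p, by simp, by simp [Real.sq_sqrt]⟩, ?_⟩
  rintro ε (rfl | rfl) x y z h
  · exact Rat.eq_zero_of_sq_eq_of_not_isSquare hp hqZ (by simpa using h)
  · have hq_pos : 0 < q := Nat.pos_of_ne_zero fun h => hq (by simp [h])
    exact eq_zero_of_neg_sq_eq (p := (p : ℚ)) (q := (q : ℚ)) (by exact_mod_cast hp.pos) (by exact_mod_cast hq_pos)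
      (by simpa using h)

/-- Let `p, q` be odd primes with `p ≡ 1 (mod 4)` and `q` a quadratic non-residue mod `p`.
Then (i) for every prime `ℓ` some twist `t·z² = p·x² + q·y²` with `t ∈ ℤ_ℓˣ` has a
primitive `ℤ_ℓ`-point; (ii) some twist `ε·z² = p·x² + q·y²` with `ε = ±1` has a nontrivial
real point; yet (iii) for each `ε = ±1` the only rational solution of
`ε·z² = p·x² + q·y²` is `(0, 0, 0)`. -/
theorem stmt_10 (p q : ℕ) (hp : p.Prime) (hq : q.Prime) (hpodd : Odd p) (hqodd : Odd q)
    (hp4 : p % 4 = 1) (hqns : ¬IsSquare ((q : ZMod p))) :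
    (∀ (ℓ : ℕ) [Fact ℓ.Prime],
      ∃ t x y z : ℤ_[ℓ],
        IsUnit t ∧
        ¬((ℓ : ℤ_[ℓ]) ∣ x ∧ (ℓ : ℤ_[ℓ]) ∣ y ∧ (ℓ : ℤ_[ℓ]) ∣ z) ∧
        t * z ^ 2 = (p : ℤ_[ℓ]) * x ^ 2 + (q : ℤ_[ℓ]) * y ^ 2) ∧
    (∃ ε : ℤ, (ε = 1 ∨ ε = -1) ∧
      ∃ x y z : ℝ, (x, y, z) ≠ (0, 0, 0) ∧
        (ε : ℝ) * z ^ 2 = (p : ℝ) * x ^ 2 + (q : ℝ) * y ^ 2) ∧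
    (∀ ε : ℤ, ε = 1 ∨ ε = -1 →
      ∀ x y z : ℚ, (ε : ℚ) * z ^ 2 = (p : ℚ) * x ^ 2 + (q : ℚ) * y ^ 2 →
        x = 0 ∧ y = 0 ∧ z = 0) :=
  stmt_10_general p q hp hqns
end
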